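/- Let T be an infinite rooted tree and m, n distinct natural numbers. There is no function ψ : T → ℂ such that M_ψ : L^(m) → L^(n) is a surjective or non-surjective isometry; i.e., no ψ satisfies ‖ψf‖_n = ‖f‖_m for all f ∈ L^(m). -/

import Mathlib

open Real Filter

/-- Iterated logarithm: ℓ₀(x) = x, ℓ_{j+1}(x) = 1 + log ℓ_j(x). -/
noncomputable def ell : ℕ → ℝ → ℝ
  | 0, x => x
  | j + 1, x => 1 + Real.log (ell j x)

/-- Λ_k(x) = ∏_{j=0}^{k-1} ℓ_j(x). -/
noncomputable def Lam (k : ℕ) (x : ℝ) : ℝ := ∏ j ∈ Finset.range k, ell j x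

/-- Discrete derivative of f on a rooted tree given by a parent map:
`f v - f (parent v)` (automatically 0 at the root since `parent o = o`). -/
def Der {V : Type*} (parent : V → V) (f : V → ℂ) (v : V) : ℂ := f v - f (parent v)

/-- The set of values |f'(v)|·Λ_k(|v|) over v ≠ o; f ∈ L^(k) iff this set is bounded above. -/
def lipSet {V : Type*} (o : V) (parent : V → V) (depth : V → ℕ) (k : ℕ) (f : V → ℂ) : Set ℝ :=
  {r | ∃ v, v ≠ o ∧ r = ‖Der parent f v‖ * Lam k (depth v)}

/-- ‖f‖_k = |f(o)| + sup_{v ≠ o} |f'(v)|·Λ_k(|v|). -/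
noncomputable def lipNorm {V : Type*} (o : V) (parent : V → V) (depth : V → ℕ) (k : ℕ)
    (f : V → ℂ) : ℝ :=
  ‖f o‖ + sSup (lipSet o parent depth k f)

/-!
Testing the isometry on three functions that are constant on each level of the tree suffices.
The constant `1` and `χ_o / 2` both have norm `1` in every `L^(k)`, which forces `|ψ(o)| = 1` and
then `ψ' = 0`, so `ψ` is a unimodular constant. The indicator of `{|v| ≥ 2}` has norm `Λ_k(2)`,
so `Λ_m(2) = Λ_n(2)`, contradicting the strict monotonicity of `k ↦ Λ_k(x)` for `x > 1`.
-/

lemma ell_one (j : ℕ) : ell j 1 = 1 := by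
  induction j with
  | zero => rfl
  | succ j ih => simp [ell, ih]

lemma lam_one (k : ℕ) : Lam k 1 = 1 := by
  simp [Lam, ell_one]

lemma one_le_ell {x : ℝ} (hx : 1 ≤ x) (j : ℕ) : 1 ≤ ell j x := by
  induction j with
  | zero => exact hx
  | succ j ih => exact le_add_of_nonneg_right (Real.log_nonneg ih)

lemma one_lt_ell {x : ℝ} (hx : 1 < x) (j : ℕ) : 1 < ell j x := by
  induction j with
  | zero => exact hx
  | succ j ih => exact lt_add_of_pos_right 1 (Real.log_pos ih)

lemma one_le_lam {x : ℝ} (hx : 1 ≤ x) (k : ℕ) : 1 ≤ Lam k x :=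
  Finset.one_le_prod fun j _ => one_le_ell hx j

lemma lam_strictMono {x : ℝ} (hx : 1 < x) : StrictMono fun k => Lam k x := by
  refine strictMono_nat_of_lt_succ fun k => ?_
  rw [Lam, Lam, Finset.prod_range_succ]
  exact lt_mul_of_one_lt_right (zero_lt_one.trans_le (one_le_lam hx.le k)) (one_lt_ell hx k)

section RootedTree

variable {V : Type*} {o : V} {parent : V → V} {depth : V → ℕ}

lemma eq_root_of_depth_eq_zero (hdepth : ∀ v, v ≠ o → depth v = depth (parent v) + 1) {v : V}
    (hv : depth v = 0) : v = o := by
  by_contra h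
  rw [hdepth v h] at hv
  exact Nat.succ_ne_zero _ hv

lemma exists_depth_eq (hdepth0 : depth o = 0)
    (hdepth : ∀ v, v ≠ o → depth v = depth (parent v) + 1)
    (hchild : ∀ v, ∃ w, w ≠ o ∧ parent w = v) (d : ℕ) : ∃ v, depth v = d := by
  induction d with
  | zero => exact ⟨o, hdepth0⟩
  | succ d ih =>
    obtain ⟨v, rfl⟩ := ih
    obtain ⟨w, hw, rfl⟩ := hchild v
    exact ⟨w, hdepth w hw⟩

lemma eq_apply_root_of_der_eq_zero (hdepth0 : depth o = 0)
    (hdepth : ∀ v, v ≠ o → depth v = depth (parent v) + 1) {f : V → ℂ}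
    (hf : ∀ v, v ≠ o → Der parent f v = 0) (v : V) : f v = f o := by
  induction hd : depth v generalizing v with
  | zero => rw [eq_root_of_depth_eq_zero hdepth hd]
  | succ d ih =>
    have hv : v ≠ o := by rintro rfl; omega
    rw [← ih (parent v) (by rw [hdepth v hv] at hd; omega)]
    exact sub_eq_zero.mp (hf v hv)

lemma der_eq_zero_of_sSup_lipSet_le_zero
    (hdepth : ∀ v, v ≠ o → depth v = depth (parent v) + 1) {k : ℕ} {f : V → ℂ}
    (hbdd : BddAbove (lipSet o parent depth k f)) (hsup : sSup (lipSet o parent depth k f) ≤ 0)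
    {v : V} (hv : v ≠ o) : Der parent f v = 0 := by
  have hlam : 0 < Lam k (depth v) :=
    zero_lt_one.trans_le (one_le_lam (by exact_mod_cast (hdepth v hv).trans_ge le_add_self) k)
  have hle : ‖Der parent f v‖ * Lam k (depth v) ≤ 0 :=
    (le_csSup hbdd ⟨v, hv, rfl⟩).trans hsup
  exact norm_le_zero_iff.mp (nonpos_of_mul_nonpos_left hle hlam)

variable (depth) in
def levelStep (d : ℕ) (a b : ℂ) (v : V) : ℂ := if depth v < d then a else b

lemma der_levelStep (hdepth : ∀ v, v ≠ o → depth v = depth (parent v) + 1) (d : ℕ) (a b : ℂ)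
    {v : V} (hv : v ≠ o) :
    Der parent (levelStep depth d a b) v = if depth v = d then b - a else 0 := by
  have := hdepth v hv
  unfold Der levelStep
  split_ifs <;> first | omega | simp

lemma lipNorm_levelStep (hdepth0 : depth o = 0)
    (hdepth : ∀ v, v ≠ o → depth v = depth (parent v) + 1) {d : ℕ} (hd : 0 < d)
    (hex : ∃ v, depth v = d) (k : ℕ) (a b : ℂ) :
    BddAbove (lipSet o parent depth k (levelStep depth d a b)) ∧
      lipNorm o parent depth k (levelStep depth d a b) = ‖a‖ + ‖b - a‖ * Lam k d := by
  obtain ⟨w, hw⟩ := hex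
  have hwo : w ≠ o := by rintro rfl; omega
  have hlam : 0 ≤ ‖b - a‖ * Lam k d :=
    mul_nonneg (norm_nonneg _) (zero_le_one.trans (one_le_lam (by exact_mod_cast hd) k))
  have hgreatest : IsGreatest (lipSet o parent depth k (levelStep depth d a b))
      (‖b - a‖ * Lam k d) := by
    refine ⟨⟨w, hwo, by rw [der_levelStep hdepth d a b hwo, if_pos hw, hw]⟩, ?_⟩
    rintro _ ⟨v, hv, rfl⟩
    rw [der_levelStep hdepth d a b hv]
    split_ifs with h
    · rw [h]
    · simpa using hlam
  refine ⟨hgreatest.bddAbove, ?_⟩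
  rw [lipNorm, hgreatest.csSup_eq, levelStep, if_pos (by omega)]

lemma const_mul_levelStep (c : ℂ) (d : ℕ) (a b : ℂ) :
    (fun v => c * levelStep depth d a b v) = levelStep depth d (c * a) (c * b) :=
  funext fun _ => mul_ite _ _ _ _

/-- Only the root lies below level `1`, so there `ψ` acts as the constant `ψ o`. -/
lemma mul_levelStep_one (hdepth : ∀ v, v ≠ o → depth v = depth (parent v) + 1)
    (ψ : V → ℂ) (a : ℂ) :
    (fun v => ψ v * levelStep depth 1 a 0 v) = levelStep depth 1 (ψ o * a) 0 := by
  funext v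
  unfold levelStep
  split_ifs with h
  · rw [eq_root_of_depth_eq_zero hdepth (Nat.lt_one_iff.mp h)]
  · exact mul_zero _

end RootedTree

theorem no_isometry_general {V : Type*} (o : V) (parent : V → V) (depth : V → ℕ)
    (hdepth0 : depth o = 0)
    (hdepth : ∀ v, v ≠ o → depth v = depth (parent v) + 1)
    (hchild : ∀ v, ∃ w, w ≠ o ∧ parent w = v)
    (m n : ℕ) (hmn : m ≠ n) :
    ¬ ∃ ψ : V → ℂ, ∀ f : V → ℂ, BddAbove (lipSet o parent depth m f) →
      BddAbove (lipSet o parent depth n (fun v => ψ v * f v)) ∧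
      lipNorm o parent depth n (fun v => ψ v * f v) = lipNorm o parent depth m f := by
  rintro ⟨ψ, hψ⟩
  have hlevel := fun {d} (hd : 0 < d) =>
    lipNorm_levelStep hdepth0 hdepth hd (exists_depth_eq hdepth0 hdepth hchild d)
  obtain ⟨-, hψroot⟩ := hψ (levelStep depth 1 (1 / 2) 0) (hlevel one_pos m _ _).1
  rw [mul_levelStep_one hdepth, (hlevel one_pos n _ _).2, (hlevel one_pos m _ _).2] at hψroot
  have hnorm : ‖ψ o‖ = 1 := by
    norm_num [lam_one] at hψroot
    linarith
  obtain ⟨hbdd, hψone⟩ := hψ (levelStep depth 1 1 1) (hlevel one_pos m _ _).1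
  have hmul_one : (fun v => ψ v * levelStep depth 1 1 1 v) = ψ := by simp [levelStep]
  rw [hmul_one, (hlevel one_pos m _ _).2] at hψone
  rw [hmul_one] at hbdd
  have hsup : sSup (lipSet o parent depth n ψ) = 0 := by
    simpa [lipNorm, hnorm] using hψone
  have hconst : ψ = fun _ => ψ o := funext <| eq_apply_root_of_der_eq_zero hdepth0 hdepth
    fun _ => der_eq_zero_of_sSup_lipSet_le_zero hdepth hbdd hsup.le
  obtain ⟨-, hψtwo⟩ := hψ (levelStep depth 2 0 1) (hlevel two_pos m _ _).1
  rw [hconst, const_mul_levelStep, (hlevel two_pos n _ _).2, (hlevel two_pos m _ _).2] at hψtwo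
  norm_num [hnorm] at hψtwo
  exact hmn ((lam_strictMono one_lt_two).injective hψtwo.symm)

/-- For distinct m, n there is no ψ making M_ψ : L^(m) → L^(n) an isometry. -/
theorem no_isometry {V : Type*} (o : V) (parent : V → V) (depth : V → ℕ)
    (hpar : parent o = o) (hdepth0 : depth o = 0)
    (hdepth : ∀ v, v ≠ o → depth v = depth (parent v) + 1)
    (hchild : ∀ v, ∃ w, w ≠ o ∧ parent w = v)
    (hdeep : ∃ w : V, 2 ≤ depth w)
    (m n : ℕ) (hmn : m ≠ n) :
    ¬ ∃ ψ : V → ℂ, ∀ f : V → ℂ, BddAbove (lipSet o parent depth m f) →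
      BddAbove (lipSet o parent depth n (fun v => ψ v * f v)) ∧
      lipNorm o parent depth n (fun v => ψ v * f v) = lipNorm o parent depth m f :=
  no_isometry_general o parent depth hdepth0 hdepth hchild m n hmn
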